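/- Generic recurrence relation for the C-orbit functions of A_2: Let z₁, z₂, z₃ be nonzero complex numbers with z₁z₂z₃ = 1, and for positive integers k, l set C_{(k,l)}(z) = Σ_{σ ∈ S₃} z_{σ(1)}^{k+l} · z_{σ(2)}^{l}, the sum over all six permutations σ of {1,2,3}. Then for all integers k, l ≥ 2: (z₁ + z₂ + z₃) · C_{(k,l)}(z) = C_{(k+1,l)}(z) + C_{(k,l−1)}(z) + C_{(k−1,l+1)}(z). -/
import Mathlib


/-- The `C`-orbit function `C_{(k,l)}` of `A₂` evaluated on the complexified torus:
the sum of `z_{σ(1)}^{k+l} z_{σ(2)}^{l}` over all six permutations `σ` of `{1,2,3}`. -/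
def CA2 (z₁ z₂ z₃ : ℂ) (k l : ℕ) : ℂ :=
  z₁ ^ (k + l) * z₂ ^ l + z₁ ^ (k + l) * z₃ ^ l + z₂ ^ (k + l) * z₁ ^ l
    + z₂ ^ (k + l) * z₃ ^ l + z₃ ^ (k + l) * z₁ ^ l + z₃ ^ (k + l) * z₂ ^ l

/-- Generic recurrence relation for the `C`-orbit functions of `A₂`:
`(z₁+z₂+z₃)·C_{(k,l)} = C_{(k+1,l)} + C_{(k,l−1)} + C_{(k−1,l+1)}` for `k, l ≥ 2`. -/
theorem CA2_recurrence (z₁ z₂ z₃ : ℂ) (h₁ : z₁ ≠ 0) (h₂ : z₂ ≠ 0) (h₃ : z₃ ≠ 0)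
    (hprod : z₁ * z₂ * z₃ = 1) (k l : ℕ) (hk : 2 ≤ k) (hl : 2 ≤ l) :
    (z₁ + z₂ + z₃) * CA2 z₁ z₂ z₃ k l =
      CA2 z₁ z₂ z₃ (k + 1) l + CA2 z₁ z₂ z₃ k (l - 1) + CA2 z₁ z₂ z₃ (k - 1) (l + 1) := by
  obtain ⟨a, rfl⟩ := Nat.exists_eq_add_of_le hk
  obtain ⟨b, rfl⟩ := Nat.exists_eq_add_of_le hl
  simp only [CA2, show 2 + a + 1 - 1 = 2 + a by omega, show 2 + b - 1 = 1 + b by omega,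
    show 2 + a - 1 = 1 + a by omega]
  linear_combination (z₁ ^ (2 + a + (1 + b)) * z₂ ^ (1 + b) + z₁ ^ (2 + a + (1 + b)) * z₃ ^ (1 + b)
    + z₂ ^ (2 + a + (1 + b)) * z₁ ^ (1 + b) + z₂ ^ (2 + a + (1 + b)) * z₃ ^ (1 + b)
    + z₃ ^ (2 + a + (1 + b)) * z₁ ^ (1 + b) + z₃ ^ (2 + a + (1 + b)) * z₂ ^ (1 + b)) * hprod
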